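/- (Bound on the center of mass, uniform ball.) Let μ be the uniform probability measure on the closed ball B(0, r) ⊂ ℝ^d. Let S ⊆ ℝ^d be a measurable set with μ(S) > 0, and let c_S := (∫_S x dμ(x)) / μ(S) be its center of mass with respect to μ. Then ‖c_S‖ ≤ r · μ(ℝ^d \ S) / μ(S). -/

import Mathlib

/-!
A neg-invariant measure has barycenter `0`, so `∫_S x dμ = -∫_{Sᶜ} x dμ`; since `μ` is carried
by `B(0, r)`, the latter has norm at most `r μ(Sᶜ)`.
-/

open MeasureTheory Metric Set

noncomputable section

/-- The uniform probability measure on the closed ball `B(0, r)` in `ℝ^d`. -/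
def uniformBallMeasure (d : ℕ) (r : ℝ) : Measure (EuclideanSpace ℝ (Fin d)) :=
  (volume (Metric.closedBall (0 : EuclideanSpace ℝ (Fin d)) r))⁻¹ •
    volume.restrict (Metric.closedBall (0 : EuclideanSpace ℝ (Fin d)) r)

end

namespace MeasureTheory.Measure.IsNegInvariant

variable {G : Type*} [MeasurableSpace G] [InvolutiveNeg G] [MeasurableNeg G] {μ : Measure G}

instance smul [μ.IsNegInvariant] (c : ENNReal) : (c • μ).IsNegInvariant :=
  ⟨by rw [Measure.neg_def, Measure.map_smul, ← Measure.neg_def, Measure.neg_eq_self]⟩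

theorem restrict [μ.IsNegInvariant] {s : Set G} (hs : MeasurableSet s)
    (hneg : -s = s) : (μ.restrict s).IsNegInvariant := by
  refine ⟨?_⟩
  have := Measure.restrict_map (μ := μ) measurable_neg hs
  rw [← Measure.neg_def, Measure.neg_eq_self, Set.neg_preimage, hneg] at this
  rw [Measure.neg_def, ← this]

end MeasureTheory.Measure.IsNegInvariant

section CenterOfMass

variable {E : Type*} [NormedAddCommGroup E] [NormedSpace ℝ E] [MeasurableSpace E]
  {μ : Measure E}

theorem integral_id_eq_zero_of_isNegInvariant [MeasurableNeg E] [μ.IsNegInvariant] :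
    ∫ x, x ∂μ = 0 := by
  have h : ∫ x, -x ∂μ = ∫ x, x ∂μ := integral_neg_eq_self id μ
  rw [integral_neg] at h
  linear_combination (norm := module) (-(1 / 2 : ℝ)) • h

variable [SecondCountableTopology E] [OpensMeasurableSpace E] [IsFiniteMeasure μ] {r : ℝ}
  {S : Set E}

theorem norm_setIntegral_id_le_mul_measureReal_compl (hmean : ∫ x, x ∂μ = 0)
    (hbound : ∀ᵐ x ∂μ, ‖x‖ ≤ r) (hS : MeasurableSet S) :
    ‖∫ x in S, x ∂μ‖ ≤ r * μ.real Sᶜ := by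
  have hint : Integrable (fun x => x) μ :=
    .of_bound stronglyMeasurable_id.aestronglyMeasurable r hbound
  have hcompl : ∫ x in S, x ∂μ = -∫ x in Sᶜ, x ∂μ := by
    rw [eq_neg_iff_add_eq_zero, integral_add_compl hS hint, hmean]
  rw [hcompl, norm_neg]
  exact norm_setIntegral_le_of_norm_le_const_ae (measure_lt_top μ _) (ae_restrict_of_ae hbound)

theorem norm_inv_measureReal_smul_setIntegral_id_le (hmean : ∫ x, x ∂μ = 0)
    (hbound : ∀ᵐ x ∂μ, ‖x‖ ≤ r) (hS : MeasurableSet S) :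
    ‖(μ.real S)⁻¹ • ∫ x in S, x ∂μ‖ ≤ r * μ.real Sᶜ / μ.real S := by
  rw [norm_smul, norm_inv, Real.norm_of_nonneg measureReal_nonneg, inv_mul_eq_div]
  exact div_le_div_of_nonneg_right
    (norm_setIntegral_id_le_mul_measureReal_compl hmean hbound hS) measureReal_nonneg

end CenterOfMass

namespace uniformBallMeasure

variable (d : ℕ) (r : ℝ)

instance : IsFiniteMeasure (uniformBallMeasure d r) :=
  ⟨by
    rw [uniformBallMeasure, Measure.smul_apply, Measure.restrict_apply_univ, smul_eq_mul]
    exact (ENNReal.inv_mul_le_one _).trans_lt ENNReal.one_lt_top⟩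

instance : (uniformBallMeasure d r).IsNegInvariant :=
  haveI := Measure.IsNegInvariant.restrict (μ := volume) measurableSet_closedBall
    (by ext x; simp : -closedBall (0 : EuclideanSpace ℝ (Fin d)) r = _)
  Measure.IsNegInvariant.smul _

theorem ae_norm_le : ∀ᵐ x ∂(uniformBallMeasure d r), ‖x‖ ≤ r :=
  Measure.ae_smul_measure ((ae_restrict_mem measurableSet_closedBall).mono
    fun _ hx => mem_closedBall_zero_iff.mp hx) _

end uniformBallMeasure

theorem center_of_mass_bound_ball_general (d : ℕ) (r : ℝ)
    (S : Set (EuclideanSpace ℝ (Fin d))) (hS : MeasurableSet S) :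
    ‖((uniformBallMeasure d r S).toReal)⁻¹ •
        ∫ x in S, x ∂(uniformBallMeasure d r)‖ ≤
      r * (uniformBallMeasure d r Sᶜ).toReal / (uniformBallMeasure d r S).toReal :=
  norm_inv_measureReal_smul_setIntegral_id_le integral_id_eq_zero_of_isNegInvariant
    (uniformBallMeasure.ae_norm_le d r) hS

/-- Bound on the center of mass for the uniform distribution on a ball: if `S` has positive
measure `μ(S)` under the uniform measure `μ` on `B(0, r)`, then its center of mass `c_S`
satisfies `‖c_S‖ ≤ r·μ(ℝ^d \ S)/μ(S)`. -/
theorem center_of_mass_bound_ball (d : ℕ) (hd : 1 ≤ d) (r : ℝ) (hr : 0 < r)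
    (S : Set (EuclideanSpace ℝ (Fin d))) (hS : MeasurableSet S)
    (hpos : 0 < (uniformBallMeasure d r S).toReal) :
    ‖((uniformBallMeasure d r S).toReal)⁻¹ •
        ∫ x in S, x ∂(uniformBallMeasure d r)‖ ≤
      r * (uniformBallMeasure d r Sᶜ).toReal / (uniformBallMeasure d r S).toReal :=
  center_of_mass_bound_ball_general d r S hS
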